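/- Under the hypotheses of the envelope identity: if x*(y) is differentiable in y, the KKT conditions hold at x*(y) with multipliers μ*(y), and for every active constraint index i the composite function ψ_i(y) = h_i(x*(y)) satisfies ∇ψ_i(y) = 0, then (Dx*(y)/Dy)ᵀ · ∇_x L(x*(y), y) = 0. -/

import Mathlib

/-! Substituting the KKT condition `∇ₓL = ∑ μᵢ ∇hᵢ` turns the correction term into
`∑ μᵢ (∇hᵢ ∘ Dx*)`. By complementary slackness each summand has `μᵢ = 0` or an active
constraint `hᵢ(x*(y)) = 0`, and in the latter case the chain rule identifies `∇hᵢ ∘ Dx*`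
with `∇ψᵢ(y) = 0`. -/

section

variable {𝕜 E F : Type*} [NontriviallyNormedField 𝕜]
  [NormedAddCommGroup E] [NormedSpace 𝕜 E] [NormedAddCommGroup F] [NormedSpace 𝕜 F]

theorem smul_fderiv_comp_eq_zero_of_mul_eq_zero {φ : F → 𝕜} {g : E → F} {y : E} {μ : 𝕜}
    (hφ : DifferentiableAt 𝕜 φ (g y)) (hg : DifferentiableAt 𝕜 g y)
    (hcs : μ * φ (g y) = 0) (hactive : φ (g y) = 0 → fderiv 𝕜 (fun y' => φ (g y')) y = 0) :
    μ • (fderiv 𝕜 φ (g y)).comp (fderiv 𝕜 g y) = 0 := by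
  rcases mul_eq_zero.mp hcs with hμ | hφ_zero
  · rw [hμ]
    exact zero_smul (A := E →L[𝕜] 𝕜) 𝕜 _
  · rw [← fderiv_fun_comp y hφ hg, hactive hφ_zero]
    exact smul_zero (A := E →L[𝕜] 𝕜) μ

theorem sum_smul_fderiv_comp_eq_zero_of_mul_eq_zero {ι : Type*} {s : Finset ι}
    {φ : ι → F → 𝕜} {g : E → F} {y : E} {μ : ι → 𝕜}
    (hφ : ∀ i, DifferentiableAt 𝕜 (φ i) (g y)) (hg : DifferentiableAt 𝕜 g y)
    (hcs : ∀ i, μ i * φ i (g y) = 0)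
    (hactive : ∀ i, φ i (g y) = 0 → fderiv 𝕜 (fun y' => φ i (g y')) y = 0) :
    (∑ i ∈ s, μ i • fderiv 𝕜 (φ i) (g y)).comp (fderiv 𝕜 g y) = 0 := by
  rw [ContinuousLinearMap.finsetSum_comp]
  refine Finset.sum_eq_zero fun i _ => ?_
  rw [ContinuousLinearMap.smul_comp]
  exact smul_fderiv_comp_eq_zero_of_mul_eq_zero (hφ i) hg (hcs i) (hactive i)

end

theorem chain_rule_correction_vanishes_general {n m q : ℕ}
    (L : (Fin n → ℝ) → (Fin m → ℝ) → ℝ)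
    (h : Fin q → (Fin n → ℝ) → ℝ)
    (hh : ∀ i, ContDiff ℝ 1 (h i))
    (xs : (Fin m → ℝ) → (Fin n → ℝ)) (hxs : Differentiable ℝ xs)
    (y : Fin m → ℝ)
    (μ : Fin q → ℝ)
    (hKKT : fderiv ℝ (fun x => L x y) (xs y) = ∑ i, (μ i) • fderiv ℝ (h i) (xs y))
    (hcs : ∀ i, μ i * h i (xs y) = 0)
    (hactive : ∀ i, h i (xs y) = 0 → fderiv ℝ (fun y' => h i (xs y')) y = 0) :
    (fderiv ℝ (fun x => L x y) (xs y)).comp (fderiv ℝ xs y) = 0 := by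
  rw [hKKT]
  exact sum_smul_fderiv_comp_eq_zero_of_mul_eq_zero
    (fun i => ((hh i).differentiable one_ne_zero).differentiableAt) (hxs y) hcs hactive

/-- Key step of the envelope identity: the chain-rule correction term vanishes,
i.e. `(Dx*(y)/Dy)ᵀ ∇_x L(x*(y), y) = 0` as a linear map. -/
theorem chain_rule_correction_vanishes {n m q : ℕ}
    (L : (Fin n → ℝ) → (Fin m → ℝ) → ℝ)
    (h : Fin q → (Fin n → ℝ) → ℝ)
    (hL : ContDiff ℝ 1 (fun p : (Fin n → ℝ) × (Fin m → ℝ) => L p.1 p.2))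
    (hh : ∀ i, ContDiff ℝ 1 (h i))
    (xs : (Fin m → ℝ) → (Fin n → ℝ)) (hxs : Differentiable ℝ xs)
    (y : Fin m → ℝ)
    (hfeas : ∀ i, 0 ≤ h i (xs y))
    (μ : Fin q → ℝ) (hμ : ∀ i, 0 ≤ μ i)
    (hKKT : fderiv ℝ (fun x => L x y) (xs y) = ∑ i, (μ i) • fderiv ℝ (h i) (xs y))
    (hcs : ∀ i, μ i * h i (xs y) = 0)
    (hactive : ∀ i, h i (xs y) = 0 → fderiv ℝ (fun y' => h i (xs y')) y = 0) :
    (fderiv ℝ (fun x => L x y) (xs y)).comp (fderiv ℝ xs y) = 0 :=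
  chain_rule_correction_vanishes_general L h hh xs hxs y μ hKKT hcs hactive
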